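/- arXiv:2410.22563 — 2 statements merged into one kernel-verified Lean document; each statement's English description precedes it below -/
import Mathlib

section
/- Suppose Assumption (A) holds, r(n−1) < (3/7)(1 − 1/α), r(n−1) < (3/7)(1 − 1/β), and r(n−1) ≤ 1/10. Then the cone Ψ is contracting-invariant for {A_L, A_R}, i.e. A v ∈ int(Ψ) ∪ {0} for every v ∈ Ψ and every A ∈ {A_L, A_R}. -/
open Matrix Polynomial Finset

noncomputable section

/-- The companion-type matrix of the `n`-dimensional border-collision normal form:
`(i,1)` entry is `-a i`, `(i,i+1)` entries are `1`, all other entries `0`. -/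
def bcMat (n : ℕ) (a : Fin n → ℝ) : Matrix (Fin n) (Fin n) ℝ :=
  Matrix.of fun i j =>
    (if (j : ℕ) = 0 then -a i else 0) + (if (j : ℕ) = (i : ℕ) + 1 then 1 else 0)

/-- The vector `b = (1,0,…,0)`. -/
def bcVec (n : ℕ) : Fin n → ℝ := fun i => if (i : ℕ) = 0 then 1 else 0

/-- `ρ` is an eigenvalue of `M` (of algebraic multiplicity one, automatic when `|ρ| > r`)
and all remaining eigenvalues of `M` over `ℂ`, counted with multiplicity,
have modulus at most `r`. -/
def specA (n : ℕ) (M : Matrix (Fin n) (Fin n) ℝ) (ρ r : ℝ) : Prop :=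
  ∃ lam : Fin (n - 1) → ℂ,
    (∀ j, ‖lam j‖ ≤ r) ∧
      M.charpoly.map (algebraMap ℝ ℂ) =
        (X - C (ρ : ℂ)) * ∏ j : Fin (n - 1), (X - C (lam j))

/-- Assumption (A). -/
def assumptionA (n : ℕ) (aL aR : Fin n → ℝ) (α β r : ℝ) : Prop :=
  1 < α ∧ 1 < β ∧ 0 < r ∧ r < 1 ∧
    specA n (bcMat n aL) α r ∧ specA n (bcMat n aR) (-β) r

/-- The border-collision normal form map `f`. -/
def bcf (n : ℕ) (aL aR : Fin n → ℝ) (x : Fin n → ℝ) : Fin n → ℝ :=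
  if ∀ i : Fin n, (i : ℕ) = 0 → x i ≤ 0 then (bcMat n aL).mulVec x + bcVec n
  else (bcMat n aR).mulVec x + bcVec n

/-- The fixed point `Y = (I − A_L)⁻¹ b`. -/
def Ypt (n : ℕ) (aL : Fin n → ℝ) : Fin n → ℝ :=
  ((1 - bcMat n aL)⁻¹).mulVec (bcVec n)

/-- The row vector `u = (α^{n-1}, …, α, 1)`. -/
def uvec (n : ℕ) (α : ℝ) : Fin n → ℝ := fun i => α ^ (n - 1 - (i : ℕ))

/-- The hyperplane `E = {x : uᵀ(x − Y) = 0}`. -/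
def Eset (n : ℕ) (aL : Fin n → ℝ) (α : ℝ) : Set (Fin n → ℝ) :=
  {x | ∑ i : Fin n, uvec n α i * (x i - Ypt n aL i) = 0}

/-- The slab `H = {x : |x_i| ≤ M_i r^{i-1}, i = 2,…,n}` with
`M_i = (2α/(α−1))·binom(n−1,i−1)`. -/
def Hset (n : ℕ) (α r : ℝ) : Set (Fin n → ℝ) :=
  {x | ∀ i : Fin n, 1 ≤ (i : ℕ) →
    |x i| ≤ 2 * α / (α - 1) * ((n - 1).choose (i : ℕ) : ℝ) * r ^ (i : ℕ)}

/-- The first component `C₁` of the point `C`. -/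
def Cfirst (n : ℕ) (aL aR : Fin n → ℝ) (α : ℝ) : ℝ :=
  (1 - 1 / (1 - bcMat n aL).det +
      1 / (1 - bcMat n aL).det *
        ∑ k ∈ univ.filter (fun k : Fin n => 1 ≤ (k : ℕ)),
          α ^ (-((k : ℕ) : ℤ)) *
            ∑ j ∈ univ.filter (fun j : Fin n => (k : ℕ) ≤ (j : ℕ)), aL j) /
    ∑ i : Fin n, α ^ (-((i : ℕ) : ℤ)) * aR i

/-- The point `C = (C₁, 0, …, 0)`. -/
def Cpt (n : ℕ) (aL aR : Fin n → ℝ) (α : ℝ) : Fin n → ℝ :=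
  fun i => if (i : ℕ) = 0 then Cfirst n aL aR α else 0

/-- The polytope `Ω = Conv({C} ∪ (E ∩ H))`. -/
def OmegaSet (n : ℕ) (aL aR : Fin n → ℝ) (α r : ℝ) : Set (Fin n → ℝ) :=
  convexHull ℝ ({Cpt n aL aR α} ∪ (Eset n aL α ∩ Hset n α r))

/-- The cone `Ψ` of scalar multiples of vectors `(1, m₁, …, m_{n-1})` with
`|m_i| ≤ N_i r^{i-1}`, `N_i = ((min(α,β)−1)/2)·binom(n−1,i−1)`. -/
def PsiSet (n : ℕ) (α β r : ℝ) : Set (Fin n → ℝ) :=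
  {x | ∃ γ : ℝ, ∃ v : Fin n → ℝ,
    (∀ i : Fin n, (i : ℕ) = 0 → v i = 1) ∧
    (∀ i : Fin n, 1 ≤ (i : ℕ) →
      |v i| ≤ (min α β - 1) / 2 * ((n - 1).choose ((i : ℕ) - 1) : ℝ) * r ^ ((i : ℕ) - 1)) ∧
    x = γ • v}

/-- `P` is the vertex `P^(s)`: the point of `E` whose `i`-th component, `i = 2,…,n`,
is `s_{i-1}·M_i r^{i-1}`. -/
def isVertexP (n : ℕ) (aL : Fin n → ℝ) (α r : ℝ) (s : Fin (n - 1) → ℝ)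
    (P : Fin n → ℝ) : Prop :=
  P ∈ Eset n aL α ∧
    ∀ i : Fin n, ∀ _h : 1 ≤ (i : ℕ),
      P i = s ⟨(i : ℕ) - 1, by have := i.isLt; omega⟩ *
        (2 * α / (α - 1) * ((n - 1).choose (i : ℕ) : ℝ) * r ^ (i : ℕ))

/-- The `k`-th elementary symmetric polynomial of `η`. -/
def esym {m : ℕ} (η : Fin m → ℂ) (k : ℕ) : ℂ :=
  ∑ t ∈ powersetCard k univ, ∏ j ∈ t, η j

end

/-!
Write `A = bcMat n a`, let `ρ` be its dominant eigenvalue and `λⱼ` the others, and put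
`μ = (min α β - 1) / 2`, `t = r (n - 1)`. Since `A` is a companion matrix,
`a_k = (-1)^(k+1) e_{k+1}(ρ, λ₁, …, λ_{n-1})`; splitting off `ρ` gives
`|a_k| ≤ |ρ| C(n-1,k) r^k + C(n-1,k+1) r^(k+1)` and `|a₀ + ρ| ≤ t`.
For `w = (1, w₁, …)` in the cone, `(A w)_i = -a_i + w_{i+1}`, so `|(A w)₀| ≥ |ρ| - t - μ` while
`|(A w)_i| ≤ C(n-1,i-1) r^(i-1) (|ρ| t + t² + μ t)` for `i ≥ 1`. The smallness of `t` makes the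
latter strictly less than `μ C(n-1,i-1) r^(i-1) |(A w)₀|`, an open condition, so `A w` lies in
the interior of `Ψ`.
-/

namespace Multiset

lemma esymm_cons_succ {R : Type*} [CommSemiring R] (a : R) (s : Multiset R) (k : ℕ) :
    (a ::ₘ s).esymm (k + 1) = s.esymm (k + 1) + a * s.esymm k := by
  simp [esymm, map_map, sum_map_mul_left]

lemma norm_esymm_le {K : Type*} [NormedCommRing K] [NormOneClass K] {s : Multiset K} {r : ℝ}
    (hs : ∀ z ∈ s, ‖z‖ ≤ r) (k : ℕ) : ‖s.esymm k‖ ≤ (card s).choose k * r ^ k := by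
  induction s using Multiset.induction_on generalizing k with
  | empty => cases k <;> simp [esymm, powersetCard_zero_right]
  | cons a s ih =>
    rcases k with _ | k
    · simp [esymm]
    have ha : ‖a‖ ≤ r := hs a (mem_cons_self a s)
    have ih := ih fun z hz => hs z (mem_cons_of_mem hz)
    calc ‖(a ::ₘ s).esymm (k + 1)‖ ≤ ‖s.esymm (k + 1)‖ + ‖a‖ * ‖s.esymm k‖ := by
          rw [esymm_cons_succ]
          exact (norm_add_le _ _).trans (add_le_add_right (norm_mul_le _ _) _)
      _ ≤ (card s).choose (k + 1) * r ^ (k + 1) + r * ((card s).choose k * r ^ k) := by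
          exact add_le_add (ih _) (mul_le_mul ha (ih k) (norm_nonneg _) ((norm_nonneg a).trans ha))
      _ = (card (a ::ₘ s)).choose (k + 1) * r ^ (k + 1) := by
          rw [card_cons, Nat.choose_succ_succ', Nat.cast_add]
          ring

end Multiset

lemma Nat.choose_succ_le_mul_choose (N k : ℕ) : N.choose (k + 1) ≤ N * N.choose k :=
  calc N.choose (k + 1) ≤ N.choose (k + 1) * (k + 1) := Nat.le_mul_of_pos_right _ k.succ_pos
    _ = N.choose k * (N - k) := Nat.choose_succ_right_eq N k
    _ ≤ N * N.choose k := by rw [mul_comm]; exact Nat.mul_le_mul_right _ (Nat.sub_le N k)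

lemma choose_succ_mul_pow_le (N k : ℕ) {r : ℝ} (hr : 0 ≤ r) :
    (N.choose (k + 1) : ℝ) * r ^ (k + 1) ≤ N * r * (N.choose k * r ^ k) := by
  have : (N.choose (k + 1) : ℝ) ≤ N * N.choose k := by
    exact_mod_cast Nat.choose_succ_le_mul_choose N k
  calc (N.choose (k + 1) : ℝ) * r ^ (k + 1) ≤ N * N.choose k * r ^ (k + 1) := by gcongr
    _ = N * r * (N.choose k * r ^ k) := by ring

lemma mulVec_bcMat_apply {n : ℕ} [NeZero n] (a v : Fin n → ℝ) (i : Fin n) :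
    (bcMat n a *ᵥ v) i = -a i * v 0 + if h : (i : ℕ) + 1 < n then v ⟨i + 1, h⟩ else 0 := by
  simp only [mulVec, dotProduct, bcMat, of_apply, add_mul, ite_mul, zero_mul, one_mul]
  rw [sum_add_distrib]
  congr 1
  · rw [sum_eq_single 0 (fun j _ hj => if_neg (Fin.val_ne_zero_iff.mpr hj))
      (fun h => absurd (mem_univ _) h), if_pos (Fin.val_zero n)]
  · split_ifs with h
    · rw [sum_eq_single ⟨i + 1, h⟩ (fun j _ hj => if_neg (fun h' => hj (Fin.ext h')))
        (fun h => absurd (mem_univ _) h), if_pos rfl]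
    · exact sum_eq_zero fun j _ => if_neg (by omega)

lemma det_charmatrix_bcMat_submatrix_zero {n : ℕ} (d : Fin (n + 1) → ℝ) :
    ((charmatrix (bcMat (n + 1) d)).submatrix (Fin.last n).succAbove
      (0 : Fin (n + 1)).succAbove).det = (-1) ^ n := by
  have hentry : ∀ i j : Fin n, ((charmatrix (bcMat (n + 1) d)).submatrix (Fin.last n).succAbove
      (0 : Fin (n + 1)).succAbove) i j =
        (if (i : ℕ) = j + 1 then X else 0) - C (if (j : ℕ) = i then 1 else 0) := by
    intro i j
    rw [submatrix_apply, charmatrix_apply]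
    simp only [Fin.succAbove_last, Fin.succAbove_zero, bcMat, of_apply, diagonal_apply,
      Fin.ext_iff, Fin.val_castSucc, Fin.val_succ, Nat.add_eq_zero_iff, one_ne_zero, and_false,
      if_false, zero_add, Nat.add_right_cancel_iff]
  rw [det_of_isLowerTriangular _ fun i j hij => ?_]
  · simp only [hentry]
    simp
  · have : (i : ℕ) < j := hij
    rw [hentry, if_neg (by omega), if_neg (by omega)]
    simp

lemma charmatrix_bcMat_submatrix_last {n : ℕ} (d : Fin (n + 1) → ℝ) :
    (charmatrix (bcMat (n + 1) d)).submatrix (Fin.last n).succAbove (Fin.last n).succAbove =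
      charmatrix (bcMat n fun i => d i.castSucc) := by
  ext1 i j
  rw [submatrix_apply, charmatrix_apply, charmatrix_apply]
  simp only [Fin.succAbove_last, bcMat, of_apply, diagonal_apply, Fin.castSucc_inj,
    Fin.val_castSucc]

lemma charpoly_bcMat_succ {n : ℕ} [NeZero n] (d : Fin (n + 1) → ℝ) :
    (bcMat (n + 1) d).charpoly =
      X * (bcMat n fun i => d i.castSucc).charpoly + C (d (Fin.last n)) := by
  have hlast : ∀ j, charmatrix (bcMat (n + 1) d) (Fin.last n) j =
      (if j = Fin.last n then X else 0) + if j = 0 then C (d (Fin.last n)) else 0 := by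
    intro j
    rw [charmatrix_apply]
    simp only [bcMat, of_apply, diagonal_apply, Fin.val_last, eq_comm (a := Fin.last n)]
    rw [if_neg j.is_lt.ne, add_zero]
    simp only [Fin.val_eq_zero_iff, apply_ite C, map_neg, map_zero]
    split_ifs <;> ring
  rw [charpoly, det_succ_row _ (Fin.last n)]
  simp only [hlast, mul_add, add_mul, sum_add_distrib, ite_mul, mul_ite, zero_mul, mul_zero,
    sum_ite_eq', mem_univ, if_true]
  rw [charmatrix_bcMat_submatrix_last, det_charmatrix_bcMat_submatrix_zero, charpoly]
  simp only [Fin.val_last, Fin.val_zero, add_zero, ← two_mul, pow_mul, neg_one_sq, one_pow,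
    one_mul, mul_right_comm _ _ ((-1 : ℝ[X]) ^ n), ← mul_pow, mul_neg_one, neg_neg]

lemma charpoly_bcMat (n : ℕ) (a : Fin n → ℝ) :
    (bcMat n a).charpoly = X ^ n + ∑ i : Fin n, C (a i) * X ^ (n - 1 - i) := by
  induction n with
  | zero => simp
  | succ n ih =>
    rcases Nat.eq_zero_or_pos n with rfl | hn
    · simp [charpoly, bcMat, det_unique]
    have : NeZero n := ⟨hn.ne'⟩
    rw [charpoly_bcMat_succ, ih, Fin.sum_univ_castSucc, mul_add, mul_sum, Fin.val_last,
      Nat.add_sub_cancel, Nat.sub_self, pow_zero, mul_one, pow_succ', add_assoc]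
    congr 2
    refine sum_congr rfl fun i _ => ?_
    rw [Fin.val_castSucc, mul_left_comm, ← pow_succ']
    congr 2
    omega

lemma coeff_charpoly_bcMat {n : ℕ} (a : Fin n → ℝ) (k : Fin n) :
    (bcMat n a).charpoly.coeff (n - 1 - k) = a k := by
  have hk := k.is_lt
  rw [charpoly_bcMat, coeff_add, coeff_X_pow, if_neg (by omega), zero_add, finsetSum_coeff,
    sum_eq_single k (fun i _ hi => ?_) (by simp)]
  · simp
  · rw [coeff_C_mul_X_pow, if_neg]
    have := i.is_lt
    omega

lemma exists_esymm_eq_coeff_bcMat {n : ℕ} [NeZero n] {a : Fin n → ℝ} {ρ r : ℝ}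
    (h : specA n (bcMat n a) ρ r) :
    ∃ s : Multiset ℂ, Multiset.card s = n - 1 ∧ (∀ z ∈ s, ‖z‖ ≤ r) ∧
      ∀ k : Fin n, (a k : ℂ) = (-1) ^ ((k : ℕ) + 1) * ((ρ : ℂ) ::ₘ s).esymm (k + 1) := by
  obtain ⟨lam, hlam, heq⟩ := h
  refine ⟨univ.val.map lam, by simp, by simpa using hlam, fun k => ?_⟩
  have hcard : Multiset.card ((ρ : ℂ) ::ₘ univ.val.map lam) = n := by
    simp [Nat.sub_add_cancel NeZero.one_le]
  have hprod : (X - C (ρ : ℂ)) * ∏ j, (X - C (lam j)) =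
      (((ρ : ℂ) ::ₘ univ.val.map lam).map fun t => X - C t).prod := by
    simp [Function.comp_def, prod_eq_multiset_prod]
  have hk := k.is_lt
  have := congrArg (coeff · (n - 1 - k)) heq
  simp only [coeff_map, coeff_charpoly_bcMat, hprod, Complex.coe_algebraMap] at this
  rw [this, Multiset.prod_X_sub_C_coeff _ (by omega), hcard,
    show n - (n - 1 - k) = k + 1 by omega]

lemma abs_coeff_bcMat_le {n : ℕ} [NeZero n] {a : Fin n → ℝ} {ρ r : ℝ}
    (h : specA n (bcMat n a) ρ r) (k : Fin n) :
    |a k| ≤ |ρ| * ((n - 1).choose k * r ^ (k : ℕ)) +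
      (n - 1).choose (k + 1) * r ^ ((k : ℕ) + 1) := by
  obtain ⟨s, hcard, hs, hcoeff⟩ := exists_esymm_eq_coeff_bcMat h
  rw [← Real.norm_eq_abs, ← Complex.norm_real, hcoeff, norm_mul, norm_pow, norm_neg, norm_one,
    one_pow, one_mul, Multiset.esymm_cons_succ, ← hcard, ← Real.norm_eq_abs, ← Complex.norm_real]
  refine (norm_add_le _ _).trans ?_
  rw [add_comm, norm_mul]
  exact add_le_add (mul_le_mul_of_nonneg_left (Multiset.norm_esymm_le hs k) (norm_nonneg _))
    (Multiset.norm_esymm_le hs (k + 1))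

lemma abs_coeff_bcMat_zero_add_le {n : ℕ} [NeZero n] {a : Fin n → ℝ} {ρ r : ℝ}
    (h : specA n (bcMat n a) ρ r) : |a 0 + ρ| ≤ (n - 1 : ℕ) * r := by
  obtain ⟨s, hcard, hs, hcoeff⟩ := exists_esymm_eq_coeff_bcMat h
  have h0 : ((a 0 + ρ : ℝ) : ℂ) = -s.esymm 1 := by
    push_cast
    rw [hcoeff 0, Fin.val_zero, zero_add, Multiset.esymm_cons_succ]
    simp [Multiset.esymm]
  rw [← Real.norm_eq_abs, ← Complex.norm_real, h0, norm_neg, ← hcard]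
  simpa using Multiset.norm_esymm_le hs 1

-- `htμ` is `t < 3/7 (1 - 1/m)` for `m = 1 + 2μ`.
lemma cone_margin {s t μ : ℝ} (ht : 0 ≤ t) (hμ : 0 < μ) (hs : 1 + 2 * μ ≤ s)
    (htμ : 7 * (1 + 2 * μ) * t < 6 * μ) :
    s * t + t ^ 2 + μ * t < μ * (s - t - μ) := by
  have hμt : t < μ := by nlinarith
  suffices (t + μ) ^ 2 < (1 + 2 * μ) * (μ - t) by nlinarith
  nlinarith [mul_nonneg hμ.le (sq_nonneg (140 * μ - 27)), mul_nonneg hμ.le ht]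

section ConeStep

variable {n : ℕ} {a w : Fin n → ℝ} {ρ r μ : ℝ}

lemma abs_shift_le (hμ : 0 ≤ μ) (hr : 0 ≤ r)
    (hw : ∀ i : Fin n, 1 ≤ (i : ℕ) → |w i| ≤ μ * ((n - 1).choose (i - 1) * r ^ ((i : ℕ) - 1)))
    (i : ℕ) :
    |if h : i + 1 < n then w ⟨i + 1, h⟩ else 0| ≤ μ * ((n - 1).choose i * r ^ i) := by
  split_ifs with h
  · simpa using hw ⟨i + 1, h⟩ (by simp)
  · rw [abs_zero]
    positivity

lemma abs_mulVec_bcMat_zero_ge [NeZero n] (hspec : specA n (bcMat n a) ρ r) (hμ : 0 ≤ μ)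
    (hr : 0 ≤ r) (hw0 : w 0 = 1)
    (hw : ∀ i : Fin n, 1 ≤ (i : ℕ) → |w i| ≤ μ * ((n - 1).choose (i - 1) * r ^ ((i : ℕ) - 1))) :
    |ρ| - (n - 1 : ℕ) * r - μ ≤ |(bcMat n a *ᵥ w) 0| := by
  have hshift := abs_shift_le hμ hr hw 0
  simp only [Nat.choose_zero_right, Nat.cast_one, pow_zero, mul_one] at hshift
  set shift := if h : 0 + 1 < n then w ⟨0 + 1, h⟩ else 0
  have hρ : ρ = (bcMat n a *ᵥ w) 0 + (a 0 + ρ) + -shift := by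
    rw [mulVec_bcMat_apply, hw0, Fin.val_zero]
    ring
  have := abs_add_three ((bcMat n a *ᵥ w) 0) (a 0 + ρ) (-shift)
  rw [← hρ, abs_neg] at this
  linarith [abs_coeff_bcMat_zero_add_le hspec]

lemma abs_mulVec_bcMat_le [NeZero n] (hspec : specA n (bcMat n a) ρ r) (hμ : 0 ≤ μ)
    (hr : 0 ≤ r) (hw0 : w 0 = 1)
    (hw : ∀ i : Fin n, 1 ≤ (i : ℕ) → |w i| ≤ μ * ((n - 1).choose (i - 1) * r ^ ((i : ℕ) - 1)))
    (i : Fin n) (hi : 1 ≤ (i : ℕ)) :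
    |(bcMat n a *ᵥ w) i| ≤ (n - 1).choose (i - 1) * r ^ ((i : ℕ) - 1) *
      (|ρ| * ((n - 1 : ℕ) * r) + ((n - 1 : ℕ) * r) ^ 2 + μ * ((n - 1 : ℕ) * r)) := by
  have hx : |(bcMat n a *ᵥ w) i| ≤ |a i| + μ * ((n - 1).choose i * r ^ (i : ℕ)) := by
    rw [mulVec_bcMat_apply, hw0, mul_one, ← abs_neg (a i)]
    exact (abs_add_le _ _).trans (add_le_add_right (abs_shift_le hμ hr hw i) _)
  have hcoeff := abs_coeff_bcMat_le hspec i
  obtain ⟨k, hk⟩ : ∃ k, (i : ℕ) = k + 1 := ⟨i - 1, by omega⟩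
  rw [hk] at hx hcoeff
  rw [hk, Nat.add_sub_cancel]
  have h1 := choose_succ_mul_pow_le (n - 1) k hr
  have h2 := choose_succ_mul_pow_le (n - 1) (k + 1) hr
  have ht : (0 : ℝ) ≤ (n - 1 : ℕ) * r := by positivity
  have hb : (0 : ℝ) ≤ (n - 1).choose k * r ^ k := by positivity
  generalize ((n - 1).choose k : ℝ) * r ^ k = b₀ at *
  generalize ((n - 1).choose (k + 1) : ℝ) * r ^ (k + 1) = b₁ at *
  generalize ((n - 1).choose (k + 1 + 1) : ℝ) * r ^ (k + 1 + 1) = b₂ at *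
  generalize ((n - 1 : ℕ) : ℝ) * r = t at *
  nlinarith [abs_nonneg ρ]

lemma abs_mulVec_bcMat_lt [NeZero n] (hspec : specA n (bcMat n a) ρ r) (hr : 0 < r)
    (hμ : 0 < μ) (hρ : 1 + 2 * μ ≤ |ρ|) (ht : 7 * (1 + 2 * μ) * ((n - 1 : ℕ) * r) < 6 * μ)
    (hw0 : w 0 = 1)
    (hw : ∀ i : Fin n, 1 ≤ (i : ℕ) → |w i| ≤ μ * ((n - 1).choose (i - 1) * r ^ ((i : ℕ) - 1))) :
    (bcMat n a *ᵥ w) 0 ≠ 0 ∧ ∀ i : Fin n, 1 ≤ (i : ℕ) →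
      |(bcMat n a *ᵥ w) i| < μ * ((n - 1).choose (i - 1) * r ^ ((i : ℕ) - 1)) *
        |(bcMat n a *ᵥ w) 0| := by
  have hmargin := cone_margin (by positivity) hμ hρ ht
  have hlow := abs_mulVec_bcMat_zero_ge hspec hμ.le hr.le hw0 hw
  have hgap : 0 < |ρ| - (n - 1 : ℕ) * r - μ := by
    nlinarith [abs_nonneg ρ, show (0 : ℝ) ≤ (n - 1 : ℕ) * r by positivity]
  refine ⟨abs_pos.mp (hgap.trans_le hlow), fun i hi => ?_⟩
  have hb : (0 : ℝ) < (n - 1).choose (i - 1) * r ^ ((i : ℕ) - 1) :=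
    mul_pos (by exact_mod_cast Nat.choose_pos (by omega)) (pow_pos hr _)
  calc |(bcMat n a *ᵥ w) i|
      ≤ (n - 1).choose (i - 1) * r ^ ((i : ℕ) - 1) *
          (|ρ| * ((n - 1 : ℕ) * r) + ((n - 1 : ℕ) * r) ^ 2 + μ * ((n - 1 : ℕ) * r)) :=
        abs_mulVec_bcMat_le hspec hμ.le hr.le hw0 hw i hi
    _ < (n - 1).choose (i - 1) * r ^ ((i : ℕ) - 1) * (μ * (|ρ| - (n - 1 : ℕ) * r - μ)) := by
        gcongr
    _ ≤ μ * ((n - 1).choose (i - 1) * r ^ ((i : ℕ) - 1)) * |(bcMat n a *ᵥ w) 0| := by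
        rw [mul_left_comm, ← mul_assoc]
        gcongr

end ConeStep

open scoped Pointwise in
lemma smul_mem_interior_PsiSet {n : ℕ} {α β r c : ℝ} {x : Fin n → ℝ} (hc : c ≠ 0)
    (hx : x ∈ interior (PsiSet n α β r)) : c • x ∈ interior (PsiSet n α β r) := by
  have hsub : c • PsiSet n α β r ⊆ PsiSet n α β r := by
    rintro _ ⟨_, ⟨γ, v, hv0, hv, rfl⟩, rfl⟩
    exact ⟨c * γ, v, hv0, hv, smul_smul c γ v⟩
  exact interior_mono hsub (by rw [interior_smul₀ hc]; exact Set.smul_mem_smul_set hx)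

lemma mem_interior_PsiSet_of_abs_lt {n : ℕ} [NeZero n] {α β r : ℝ} {x : Fin n → ℝ}
    (h0 : x 0 ≠ 0)
    (h : ∀ i : Fin n, 1 ≤ (i : ℕ) →
      |x i| < (min α β - 1) / 2 * ((n - 1).choose (i - 1) * r ^ ((i : ℕ) - 1)) * |x 0|) :
    x ∈ interior (PsiSet n α β r) := by
  set U := {y : Fin n → ℝ | y 0 ≠ 0 ∧ ∀ i : Fin n, 1 ≤ (i : ℕ) →
      |y i| < (min α β - 1) / 2 * ((n - 1).choose (i - 1) * r ^ ((i : ℕ) - 1)) * |y 0|}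
  have hopen : IsOpen U := by
    simp only [U, Set.ofPred_and, Set.ofPred_forall]
    refine (isOpen_ne_fun (continuous_apply 0) continuous_const).inter ?_
    exact isOpen_iInter_of_finite fun i => isOpen_iInter_of_finite fun _ =>
      isOpen_lt (by fun_prop) (by fun_prop)
  have hsub : U ⊆ PsiSet n α β r := by
    rintro y ⟨hy0, hy⟩
    refine ⟨y 0, (y 0)⁻¹ • y, fun i hi => ?_, fun i hi => ?_,
      by rw [smul_smul, mul_inv_cancel₀ hy0, one_smul]⟩
    · rw [Fin.val_eq_zero_iff.mp hi, Pi.smul_apply, smul_eq_mul, inv_mul_cancel₀ hy0]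
    · rw [Pi.smul_apply, smul_eq_mul, abs_mul, abs_inv, inv_mul_le_iff₀ (abs_pos.mpr hy0)]
      linarith [hy i hi]
  exact interior_maximal hsub hopen ⟨h0, h⟩

lemma mulVec_bcMat_mem_interior_PsiSet {n : ℕ} [NeZero n] {a v : Fin n → ℝ} {α β ρ r : ℝ}
    (hspec : specA n (bcMat n a) ρ r) (hr : 0 < r) (hαβ : 1 < min α β) (hρ : min α β ≤ |ρ|)
    (ht : r * ((n : ℝ) - 1) < 3 / 7 * (1 - 1 / min α β)) (hv : v ∈ PsiSet n α β r)
    (hv0 : v ≠ 0) : bcMat n a *ᵥ v ∈ interior (PsiSet n α β r) := by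
  obtain ⟨γ, w, hw0, hw, rfl⟩ := hv
  have hγ : γ ≠ 0 := by rintro rfl; exact hv0 (zero_smul _ _)
  have hn : ((n - 1 : ℕ) : ℝ) = n - 1 := Nat.cast_pred (Nat.pos_of_neZero n)
  have ht' :
      7 * (1 + 2 * ((min α β - 1) / 2)) * ((n - 1 : ℕ) * r) < 6 * ((min α β - 1) / 2) := by
    have : (1 - 1 / min α β) * min α β = min α β - 1 := by field_simp
    rw [hn]
    nlinarith
  obtain ⟨hne, hlt⟩ := abs_mulVec_bcMat_lt hspec hr (by linarith) (by linarith) ht'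
    (hw0 0 (Fin.val_zero n)) fun i hi => by simpa only [mul_assoc] using hw i hi
  rw [mulVec_smul]
  exact smul_mem_interior_PsiSet hγ (mem_interior_PsiSet_of_abs_lt hne hlt)

open Matrix in
theorem stmt_16_general (n : ℕ) (hn : 2 ≤ n) (aL aR : Fin n → ℝ) (α β r : ℝ)
    (hA : assumptionA n aL aR α β r)
    (h1 : r * ((n : ℝ) - 1) < 3 / 7 * (1 - 1 / α))
    (h2 : r * ((n : ℝ) - 1) < 3 / 7 * (1 - 1 / β)) :
    ∀ v ∈ PsiSet n α β r,
      (bcMat n aL).mulVec v ∈ interior (PsiSet n α β r) ∪ {0} ∧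
      (bcMat n aR).mulVec v ∈ interior (PsiSet n α β r) ∪ {0} := by
  obtain ⟨hα, hβ, hr, -, hL, hR⟩ := hA
  have : NeZero n := ⟨by omega⟩
  have ht : r * ((n : ℝ) - 1) < 3 / 7 * (1 - 1 / min α β) := by
    rcases min_choice α β with h | h <;> rwa [h]
  intro v hv
  rcases eq_or_ne v 0 with rfl | hv0
  · simp
  refine ⟨Or.inl (mulVec_bcMat_mem_interior_PsiSet hL hr (lt_min hα hβ) ?_ ht hv hv0),
    Or.inl (mulVec_bcMat_mem_interior_PsiSet hR hr (lt_min hα hβ) ?_ ht hv hv0)⟩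
  · exact (min_le_left α β).trans (le_abs_self α)
  · exact (min_le_right α β).trans (by rw [abs_neg]; exact le_abs_self β)

open Matrix in
/-- Under Assumption (A), `r(n−1) < (3/7)(1 − 1/α)`, `r(n−1) < (3/7)(1 − 1/β)`, and
`r(n−1) ≤ 1/10`, the cone `Ψ` is contracting-invariant for `{A_L, A_R}`:
`A v ∈ int(Ψ) ∪ {0}` for every `v ∈ Ψ` and `A ∈ {A_L, A_R}`. -/
theorem stmt_16 (n : ℕ) (hn : 2 ≤ n) (aL aR : Fin n → ℝ) (α β r : ℝ)
    (hA : assumptionA n aL aR α β r)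
    (h1 : r * ((n : ℝ) - 1) < 3 / 7 * (1 - 1 / α))
    (h2 : r * ((n : ℝ) - 1) < 3 / 7 * (1 - 1 / β))
    (h3 : r * ((n : ℝ) - 1) ≤ 1 / 10) :
    ∀ v ∈ PsiSet n α β r,
      (bcMat n aL).mulVec v ∈ interior (PsiSet n α β r) ∪ {0} ∧
      (bcMat n aR).mulVec v ∈ interior (PsiSet n α β r) ∪ {0} :=
  stmt_16_general n hn aL aR α β r hA h1 h2
end

section
/- Let n ≥ 2 be an integer and r > 0 be real with r(n−1) ≤ 1. Then Σ_{i=2}^{n−1} (binom(n−1, i−1)·r^{i−1})² < 2 r²(n−1)² (where for n = 2 the empty sum is 0). -/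
/-!
Put `m = n - 1` and `x = r m ≤ 1`. For `1 ≤ j`, `C(m, j) r^j ≤ x^j / j! ≤ 2x / 2^j`, because
`x^j ≤ x` and `2^(j-1) ≤ j!`. Squaring and summing the geometric series `∑_{j ≥ 1} 4^{-j} = 1/3`
bounds the sum by `(4/3) x² < 2 x²`.
-/

open Finset
open scoped Nat

lemma choose_mul_pow_le_two_mul_half_pow {m j : ℕ} {r : ℝ} (hr : 0 ≤ r) (hrm : r * m ≤ 1)
    (hj : j ≠ 0) : (m.choose j : ℝ) * r ^ j ≤ 2 * (r * m) * (1 / 2) ^ j := by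
  have two_pow_le : (2 : ℝ) ^ j ≤ 2 * j ! := by
    obtain ⟨k, rfl⟩ : ∃ k, j = k + 1 := ⟨j - 1, by omega⟩
    have := @Nat.factorial_mul_pow_le_factorial 1 k
    rw [add_comm 1 k, Nat.factorial_one, one_mul, one_add_one_eq_two] at this
    rw [pow_succ']
    exact_mod_cast Nat.mul_le_mul_left 2 this
  calc (m.choose j : ℝ) * r ^ j ≤ (m ^ j / j !) * r ^ j := by gcongr; exact Nat.choose_le_pow_div j m
    _ = (r * m) ^ j / j ! := by rw [mul_pow]; ring
    _ ≤ r * m / j ! := by gcongr; exact pow_le_of_le_one (by positivity) hrm hj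
    _ = 2 * (r * m) * (1 / 2) ^ j * (2 ^ j / (2 * j !)) := by
      field_simp; rw [mul_assoc, ← mul_pow]; norm_num
    _ ≤ 2 * (r * m) * (1 / 2) ^ j := by
      apply mul_le_of_le_one_right (by positivity)
      rw [div_le_one (by positivity)]; exact two_pow_le

lemma sum_sq_choose_mul_pow_le {m : ℕ} {r : ℝ} (hr : 0 ≤ r) (hrm : r * m ≤ 1) :
    ∑ j ∈ Ico 1 m, ((m.choose j : ℝ) * r ^ j) ^ 2 ≤ 4 / 3 * (r * m) ^ 2 := by
  calc ∑ j ∈ Ico 1 m, ((m.choose j : ℝ) * r ^ j) ^ 2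
      ≤ ∑ j ∈ Ico 1 m, 4 * (r * m) ^ 2 * (1 / 4) ^ j := by
        gcongr with j hj
        have hj0 : j ≠ 0 := Nat.one_le_iff_ne_zero.mp (mem_Ico.mp hj).1
        calc _ ≤ (2 * (r * m) * (1 / 2) ^ j) ^ 2 :=
              pow_le_pow_left₀ (by positivity) (choose_mul_pow_le_two_mul_half_pow hr hrm hj0) 2
          _ = _ := by rw [show (1 / 4 : ℝ) = (1 / 2) ^ 2 by norm_num, ← pow_mul]; ring
    _ = 4 * (r * m) ^ 2 * ∑ j ∈ Ico 1 m, (1 / 4) ^ j := by rw [mul_sum]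
    _ ≤ 4 * (r * m) ^ 2 * ((1 / 4) ^ 1 / (1 - 1 / 4)) := by
        gcongr; exact geom_sum_Ico_le_of_lt_one (by norm_num) (by norm_num)
    _ = 4 / 3 * (r * m) ^ 2 := by ring

/-- Let `n ≥ 2` be an integer and `r > 0` real with `r(n−1) ≤ 1`. Then
`Σ_{i=2}^{n−1} (binom(n−1, i−1)·r^{i−1})² < 2 r²(n−1)²`. -/
theorem stmt_19 (n : ℕ) (r : ℝ) (hn : 2 ≤ n) (hr : 0 < r)
    (hrn : r * ((n : ℝ) - 1) ≤ 1) :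
    ∑ i ∈ Finset.Icc 2 (n - 1), (((n - 1).choose (i - 1) : ℝ) * r ^ (i - 1)) ^ 2
      < 2 * r ^ 2 * ((n : ℝ) - 1) ^ 2 := by
  obtain ⟨m, rfl⟩ : ∃ m, n = m + 1 := ⟨n - 1, by omega⟩
  have hm : (0 : ℝ) < m := by exact_mod_cast (by omega : 0 < m)
  push_cast at hrn ⊢
  simp only [add_sub_cancel_right] at hrn ⊢
  have reindex : ∑ i ∈ Icc 2 m, ((m.choose (i - 1) : ℝ) * r ^ (i - 1)) ^ 2
      = ∑ j ∈ Ico 1 m, ((m.choose j : ℝ) * r ^ j) ^ 2 := by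
    rw [← Ico_add_one_right_eq_Icc, sum_Ico_eq_sum_range, sum_Ico_eq_sum_range]
    exact sum_congr (by congr 1) fun k _ => by rw [show 2 + k - 1 = 1 + k by omega]
  calc _ = ∑ j ∈ Ico 1 m, ((m.choose j : ℝ) * r ^ j) ^ 2 := reindex
    _ ≤ 4 / 3 * (r * m) ^ 2 := sum_sq_choose_mul_pow_le hr.le hrn
    _ < 2 * r ^ 2 * m ^ 2 := by nlinarith [mul_pos hr hm]
end
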